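/- Consider a supercharge Q ∈ S ⊗ W in any dimension n, where S (odd n) or S₊ ⊕ S₋ (even n) carries the nondegenerate vector-valued pairing Γ into V = ℂⁿ, and W is an auxiliary space as in the classification of spinorial representations. Then the image S_Q of the map [Q,−] : Σ → V has dimension at least n/2. -/

import Mathlib

/-! Let `U` be the image of `[Q, -]`. Taking `x` from the `BW`-dual basis of `(wᵢ)` shows
`Γ (Qᵢ, t) ∈ U`, so every `v ∈ Uᗮ` kills each `Qᵢ` under Clifford multiplication:
`pr (v · Qᵢ, t) = B (v, Γ (Qᵢ, t)) = 0` for all `t`. For two such vectors,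
`(v w + w v) · Qᵢ = 2 B(v, w) Qᵢ` vanishes, so with `Qᵢ ≠ 0` the subspace `Uᗮ` is totally
isotropic, and `n - dim U = dim Uᗮ ≤ dim U`. -/

open Module CliffordAlgebra

namespace LinearMap.BilinForm

variable {K V : Type*} [Field K] [AddCommGroup V] [Module K V] [FiniteDimensional K V]

theorem finrank_le_two_mul_finrank_of_isOrtho_orthogonal {B : LinearMap.BilinForm K V}
    (hB : B.Nondegenerate) (hrefl : B.IsRefl) (U : Submodule K V)
    (hU : ∀ v ∈ B.orthogonal U, ∀ w ∈ B.orthogonal U, B v w = 0) :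
    finrank K V ≤ 2 * finrank K U := by
  have hle : B.orthogonal U ≤ U := by
    conv_rhs => rw [← orthogonal_orthogonal hB hrefl U]
    exact fun w hw v hv => hU v hv w hw
  have := Submodule.finrank_mono hle
  rw [finrank_orthogonal hB] at this
  have := Submodule.finrank_le U
  omega

end LinearMap.BilinForm

section DualBasis

variable {K W X : Type*} [Field K] [AddCommGroup W] [Module K W] [FiniteDimensional K W]
  [AddCommGroup X] [Module K X]

theorem mem_span_sum_smul_of_separatingLeft {ι T : Type*} [Fintype ι] [DecidableEq ι]
    {BW : W →ₗ[K] W →ₗ[K] K} (hBW : BW.SeparatingLeft) (b : Basis ι K W)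
    (f : ι → T → X) (i : ι) (t : T) :
    f i t ∈ Submodule.span K {v : X | ∃ (x : W) (t : T), (∑ j, BW (b j) x • f j t) = v} := by
  let BW' : LinearMap.BilinForm K W := BW.flip
  have hnd : BW'.Nondegenerate := (LinearMap.BilinForm.Nondegenerate.ofSeparatingLeft hBW).flip
  refine Submodule.subset_span ⟨BW'.dualBasis hnd b i, t, ?_⟩
  have hdual (j : ι) : BW (b j) (BW'.dualBasis hnd b i) = if j = i then 1 else 0 :=
    LinearMap.BilinForm.apply_dualBasis_left hnd b i j
  simp [hdual]

end DualBasis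

namespace CliffordAlgebra

variable {K V M : Type*} [Field K] [AddCommGroup V] [Module K V] {Q : QuadraticForm K V}
  [AddCommGroup M] [Module K M] [Module (CliffordAlgebra Q) M]
  [IsScalarTower K (CliffordAlgebra Q) M]

theorem polar_eq_zero_of_ι_smul_eq_zero {v w : V} {s : M} (hs : s ≠ 0)
    (hv : ι Q v • s = 0) (hw : ι Q w • s = 0) : QuadraticMap.polar Q v w = 0 := by
  have h : (ι Q v * ι Q w + ι Q w * ι Q v) • s = 0 := by
    rw [add_smul, mul_smul, mul_smul, hv, hw, smul_zero, smul_zero, add_zero]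
  rw [ι_mul_ι_add_swap, algebraMap_smul] at h
  exact (smul_eq_zero.mp h).resolve_right hs

end CliffordAlgebra

theorem stmt8_general
    {V : Type*} [AddCommGroup V] [Module ℂ V] [FiniteDimensional ℂ V]
    (Qf : QuadraticForm ℂ V) (B : V →ₗ[ℂ] V →ₗ[ℂ] ℂ)
    (hBsymm : ∀ v w : V, B v w = B w v)
    (hQB : ∀ v : V, Qf v = B v v)
    (hBnd : ∀ v : V, (∀ w : V, B v w = 0) → v = 0)
    {S : Type*} [AddCommGroup S] [Module ℂ S]
    [Module (CliffordAlgebra Qf) S] [IsScalarTower ℂ (CliffordAlgebra Qf) S]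
    (pr : S →ₗ[ℂ] S →ₗ[ℂ] ℂ)
    (hprnd : ∀ s : S, s ≠ 0 → ∃ t : S, pr s t ≠ 0)
    (Γ : S →ₗ[ℂ] S →ₗ[ℂ] V)
    (hΓ : ∀ (v : V) (s t : S), B v (Γ s t) = pr (ι Qf v • s) t)
    {W : Type*} [AddCommGroup W] [Module ℂ W] [FiniteDimensional ℂ W]
    (BW : W →ₗ[ℂ] W →ₗ[ℂ] ℂ)
    (hBWnd : ∀ u : W, (∀ v : W, BW u v = 0) → u = 0)
    (k : ℕ) (wb : Basis (Fin k) ℂ W)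
    (Qs : Fin k → S) (hQ : ∃ i, Qs i ≠ 0) :
    finrank ℂ V ≤ 2 * finrank ℂ (Submodule.span ℂ
      {v : V | ∃ (x : W) (t : S), (∑ i, BW (wb i) x • Γ (Qs i) t) = v}) := by
  obtain ⟨i₀, hi₀⟩ := hQ
  have hrefl : B.IsRefl := fun v w h => by rwa [hBsymm]
  have hnd : B.Nondegenerate := LinearMap.BilinForm.Nondegenerate.ofSeparatingLeft hBnd
  refine LinearMap.BilinForm.finrank_le_two_mul_finrank_of_isOrtho_orthogonal hnd hrefl _ ?_
  have hann : ∀ u : V, (∀ t, B (Γ (Qs i₀) t) u = 0) → ι Qf u • Qs i₀ = 0 := by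
    intro u hu
    by_contra hne
    obtain ⟨t, ht⟩ := hprnd _ hne
    rw [← hΓ, hBsymm] at ht
    exact ht (hu t)
  have hmem (t : S) := mem_span_sum_smul_of_separatingLeft hBWnd wb (fun i => Γ (Qs i)) i₀ t
  intro v hv w hw
  have hpolar := polar_eq_zero_of_ι_smul_eq_zero hi₀
    (hann v fun t => hv _ (hmem t)) (hann w fun t => hw _ (hmem t))
  simp only [QuadraticMap.polar, hQB, map_add, LinearMap.add_apply, hBsymm w v] at hpolar
  linear_combination hpolar / 2

/-- For an arbitrary supercharge `Q = ∑ Qᵢ ⊗ wᵢ` in a spinorial representation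
`Σ = S ⊗ W` in dimension `n` (with `S` an irreducible Clifford module carrying
the invariant pairing `pr` and vector-valued pairing `Γ`, and `W` carrying a
nondegenerate symmetric pairing), the image `S_Q = Γ(Q, Σ) ⊆ V` of `[Q,−]`
has dimension at least `n/2`. -/
theorem stmt8
    {V : Type*} [AddCommGroup V] [Module ℂ V] [FiniteDimensional ℂ V]
    (Qf : QuadraticForm ℂ V) (B : V →ₗ[ℂ] V →ₗ[ℂ] ℂ)
    (hBsymm : ∀ v w : V, B v w = B w v)
    (hQB : ∀ v : V, Qf v = B v v)
    (hBnd : ∀ v : V, (∀ w : V, B v w = 0) → v = 0)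
    {S : Type*} [AddCommGroup S] [Module ℂ S] [FiniteDimensional ℂ S]
    [Module (CliffordAlgebra Qf) S] [IsScalarTower ℂ (CliffordAlgebra Qf) S]
    [IsSimpleModule (CliffordAlgebra Qf) S]
    (pr : S →ₗ[ℂ] S →ₗ[ℂ] ℂ)
    (hprnd : ∀ s : S, s ≠ 0 → ∃ t : S, pr s t ≠ 0)
    (hprinv : ∀ v : V, Qf v = 1 → ∀ s t : S, pr (ι Qf v • s) (ι Qf v • t) = pr s t)
    (Γ : S →ₗ[ℂ] S →ₗ[ℂ] V)
    (hΓ : ∀ (v : V) (s t : S), B v (Γ s t) = pr (ι Qf v • s) t)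
    {W : Type*} [AddCommGroup W] [Module ℂ W] [FiniteDimensional ℂ W]
    (BW : W →ₗ[ℂ] W →ₗ[ℂ] ℂ)
    (hBWsym : ∀ u v : W, BW u v = BW v u)
    (hBWnd : ∀ u : W, (∀ v : W, BW u v = 0) → u = 0)
    (k : ℕ) (wb : Basis (Fin k) ℂ W)
    (Qs : Fin k → S) (hQ : ∃ i, Qs i ≠ 0) :
    finrank ℂ V ≤ 2 * finrank ℂ (Submodule.span ℂ
      {v : V | ∃ (x : W) (t : S), (∑ i, BW (wb i) x • Γ (Qs i) t) = v}) :=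
  stmt8_general Qf B hBsymm hQB hBnd pr hprnd Γ hΓ BW hBWnd k wb Qs hQ
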